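/- Let A and B be abelian categories and L ⊣ R an adjunction with L : A ⥤ B additive, exact and conservative. Let T = R ∘ L be the associated monad on A with unit η : id_A → T, and for an object F of A let B^n(F) = T^{n+1}(F) be the cosimplicial bar object, with cofaces δ_i^n = T^i η T^{n−i} : T^n(F) → T^{n+1}(F) for 0 ≤ i ≤ n. Then the augmented cochain complex 0 → F →^{η_F} B^0(F) →^{d^0} B^1(F) →^{d^1} ⋯, whose differentials d^n are the alternating sums of the coface maps, is exact; equivalently, the augmentation from F into the cochain complex associated with the cosimplicial object B^•(F) is a quasi-isomorphism. -/

import Mathlib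

/-!
Splitting off the coface `δ₀ = η` from the alternating sum gives the recursion
`dₙ₊₁ = η - T(dₙ)` with `d₀ = η_F`. By naturality of `η` this yields
`dₙ ≫ dₙ₊₁ = (η - dₙ) ≫ T(dₙ) = T(dₙ₋₁ ≫ dₙ)`, so the augmented sequence is a complex.
After applying `L`, the counits `ε_{L Tⁿ F}` form a contracting homotopy (triangle identity and
naturality of `ε`), so its image under `L` is exact; an exact conservative functor reflects
exactness.
-/

open CategoryTheory CategoryTheory.Limits

namespace Statement1

variable {A : Type*} {B : Type*} [Category A] [Category B]

/-- Iterates of the monad `T = L ⋙ R` applied to `F` : `pw L R F n = Tⁿ F`. -/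
def pw (L : A ⥤ B) (R : B ⥤ A) (F : A) : ℕ → A
  | 0 => F
  | n + 1 => (L ⋙ R).obj (pw L R F n)

/-- The coface map `δᵢⁿ = Tⁱ η T^{n-i} : Tⁿ F ⟶ T^{n+1} F` of the cosimplicial bar object,
for `0 ≤ i ≤ n`, where `η` is the unit of the adjunction. -/
def coface (L : A ⥤ B) (R : B ⥤ A) (adj : L ⊣ R) (F : A) :
    (n : ℕ) → (i : ℕ) → i ≤ n → (pw L R F n ⟶ pw L R F (n + 1))
  | n, 0, _ => adj.unit.app (pw L R F n)
  | n + 1, i + 1, h => (L ⋙ R).map (coface L R adj F n i (Nat.le_of_succ_le_succ h))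

/-- The differential `dⁿ : Bⁿ(F) ⟶ B^{n+1}(F)` of the cochain complex associated with the
cosimplicial bar object `Bⁿ(F) = T^{n+1}(F)`: the alternating sum of the coface maps
`δᵢ^{n+1} : T^{n+1}F ⟶ T^{n+2}F`, `0 ≤ i ≤ n+1`. -/
noncomputable def dBar [Preadditive A] (L : A ⥤ B) (R : B ⥤ A) (adj : L ⊣ R) (F : A) (n : ℕ) :
    pw L R F (n + 1) ⟶ pw L R F (n + 2) :=
  ∑ i : Fin (n + 2), ((-1 : ℤ) ^ (i : ℕ)) • coface L R adj F (n + 1) i (by omega)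

lemma ShortComplex.exact_of_nullhomotopic_id {C : Type*} [Category C] [Abelian C]
    (S : ShortComplex C) (h₁ : S.X₂ ⟶ S.X₁) (h₂ : S.X₃ ⟶ S.X₂)
    (H : h₁ ≫ S.f + S.g ≫ h₂ = 𝟙 S.X₂) : S.Exact := by
  rw [ShortComplex.exact_iff_exact_up_to_refinements]
  intro X x₂ hx₂
  refine ⟨X, 𝟙 X, inferInstance, x₂ ≫ h₁, ?_⟩
  calc 𝟙 X ≫ x₂ = x₂ ≫ (h₁ ≫ S.f + S.g ≫ h₂) := by rw [H, Category.id_comp, Category.comp_id]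
    _ = (x₂ ≫ h₁) ≫ S.f := by simp [reassoc_of% hx₂]

section Bar

variable (L : A ⥤ B) (R : B ⥤ A) (adj : L ⊣ R) (F : A)

lemma mono_unit_app [L.ReflectsMonomorphisms] : Mono (adj.unit.app F) :=
  have : IsSplitMono (L.map (adj.unit.app F)) := .mk' ⟨_, adj.left_triangle_components F⟩
  L.mono_of_mono_map inferInstance

lemma map_coface_zero_comp_counit (n : ℕ) :
    L.map (coface L R adj F n 0 n.zero_le) ≫ adj.counit.app (L.obj (pw L R F n)) = 𝟙 _ := by
  cases n <;> exact adj.left_triangle_components _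

noncomputable def augmentedDiff [Preadditive A] : (n : ℕ) → (pw L R F n ⟶ pw L R F (n + 1))
  | 0 => adj.unit.app F
  | n + 1 => dBar L R adj F n

section Preadditive

variable [Preadditive A]

lemma sum_coface_eq_augmentedDiff (n : ℕ) :
    ∑ i : Fin (n + 1), ((-1 : ℤ) ^ (i : ℕ)) • coface L R adj F n i (by omega) =
      augmentedDiff L R adj F n := by
  cases n with
  | zero => exact (Fin.sum_univ_one _).trans (one_smul ℤ _)
  | succ n => rfl

variable [Preadditive B] [L.Additive]

/-- `(L ⋙ R).map`, retyped between iterates so that it can be added to the cofaces. -/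
def pwMap {m n : ℕ} : (pw L R F m ⟶ pw L R F n) →+ (pw L R F (m + 1) ⟶ pw L R F (n + 1)) :=
  have := adj.right_adjoint_additive
  (L ⋙ R).mapAddHom

lemma pwMap_comp {l m n : ℕ} (f : pw L R F l ⟶ pw L R F m) (g : pw L R F m ⟶ pw L R F n) :
    pwMap L R adj F (f ≫ g) = pwMap L R adj F f ≫ pwMap L R adj F g :=
  (L ⋙ R).map_comp f g

lemma comp_coface_zero {m n : ℕ} (f : pw L R F m ⟶ pw L R F n) :
    f ≫ coface L R adj F n 0 n.zero_le =
      coface L R adj F m 0 m.zero_le ≫ pwMap L R adj F f := by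
  cases m <;> cases n <;> exact adj.unit.naturality f

lemma map_pwMap_comp_counit {m n : ℕ} (f : pw L R F m ⟶ pw L R F n) :
    L.map (pwMap L R adj F f) ≫ adj.counit.app (L.obj (pw L R F n)) =
      adj.counit.app (L.obj (pw L R F m)) ≫ L.map f :=
  adj.counit.naturality (L.map f)

lemma augmentedDiff_succ (n : ℕ) :
    augmentedDiff L R adj F (n + 1) =
      coface L R adj F (n + 1) 0 (n + 1).zero_le - pwMap L R adj F (augmentedDiff L R adj F n) := by
  change dBar L R adj F n = _
  rw [dBar, Fin.sum_univ_succ, ← sum_coface_eq_augmentedDiff, map_sum, sub_eq_add_neg,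
    ← Finset.sum_neg_distrib]
  congr 1
  · exact one_smul ℤ _
  · refine Finset.sum_congr rfl fun i _ => ?_
    rw [map_zsmul, ← neg_smul]
    congr 1
    rw [Fin.val_succ, pow_succ, mul_neg_one]

lemma augmentedDiff_comp_augmentedDiff (n : ℕ) :
    augmentedDiff L R adj F n ≫ augmentedDiff L R adj F (n + 1) = 0 := by
  have hcomp : ∀ n, augmentedDiff L R adj F n ≫ augmentedDiff L R adj F (n + 1) =
      (coface L R adj F n 0 n.zero_le - augmentedDiff L R adj F n) ≫
        pwMap L R adj F (augmentedDiff L R adj F n) := fun n => by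
    rw [augmentedDiff_succ, Preadditive.comp_sub, comp_coface_zero, Preadditive.sub_comp]
  induction n with
  | zero => rw [hcomp, show coface L R adj F 0 0 _ = augmentedDiff L R adj F 0 from rfl, sub_self,
      zero_comp]
  | succ n ih =>
    have hsucc : coface L R adj F (n + 1) 0 (n + 1).zero_le - augmentedDiff L R adj F (n + 1) =
        pwMap L R adj F (augmentedDiff L R adj F n) := by
      rw [augmentedDiff_succ, sub_sub_cancel]
    rw [hcomp, hsucc, ← pwMap_comp, ih, map_zero]

lemma map_augmentedDiff_succ_comp_counit (n : ℕ) :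
    L.map (augmentedDiff L R adj F (n + 1)) ≫ adj.counit.app (L.obj (pw L R F (n + 1))) =
      𝟙 _ - adj.counit.app (L.obj (pw L R F n)) ≫ L.map (augmentedDiff L R adj F n) := by
  rw [augmentedDiff_succ, L.map_sub]
  exact (Preadditive.sub_comp _ _ _).trans
    (congrArg₂ _ (map_coface_zero_comp_counit L R adj F _) (map_pwMap_comp_counit L R adj F _))

end Preadditive

variable [Abelian A] [Abelian B] [L.Additive] [PreservesFiniteLimits L]
  [PreservesFiniteColimits L] [L.ReflectsIsomorphisms]

lemma exact_of_exact_map (S : ShortComplex A) (h : (S.map L).Exact) : S.Exact :=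
  ((JointlyReflectIsomorphisms.mk fun f hf => have := hf (); isIso_of_reflects_iso f L :
    JointlyReflectIsomorphisms fun _ : Unit => L).exact_iff S).2 fun _ => h

lemma exact_augmentedDiff (n : ℕ) :
    (ShortComplex.mk _ _ (augmentedDiff_comp_augmentedDiff L R adj F n)).Exact :=
  exact_of_exact_map L _ <| ShortComplex.exact_of_nullhomotopic_id _
    (adj.counit.app (L.obj (pw L R F n))) (adj.counit.app (L.obj (pw L R F (n + 1))))
    (add_eq_of_eq_sub' (map_augmentedDiff_succ_comp_counit L R adj F n))

end Bar

/--
Let `A` and `B` be abelian categories and `adj : L ⊣ R` an adjunction with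
`L : A ⥤ B` additive, exact (preserving finite limits and colimits) and conservative
(reflecting isomorphisms). Let `T = R ∘ L` be the associated monad with unit `η`, and for an
object `F` of `A` let `Bⁿ(F) = T^{n+1}(F)` be the cosimplicial bar object, with cofaces
`δᵢⁿ = Tⁱ η T^{n-i}`. Then the augmented cochain complex
`0 → F → B⁰(F) → B¹(F) → ⋯`, whose differentials are the alternating sums of the coface maps,
is exact: the augmentation `η_F` is a monomorphism, the sequence is a complex (consecutive
composites vanish), and it is exact at each spot.
-/
theorem statement1 [Abelian A] [Abelian B] (L : A ⥤ B) (R : B ⥤ A) (adj : L ⊣ R)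
    [L.Additive] [PreservesFiniteLimits L] [PreservesFiniteColimits L]
    [L.ReflectsIsomorphisms] (F : A) :
    Mono (adj.unit.app F) ∧
    (∃ w : (adj.unit.app F : F ⟶ pw L R F 1) ≫ dBar L R adj F 0 = 0,
      (ShortComplex.mk _ _ w).Exact) ∧
    (∀ n : ℕ, ∃ w : dBar L R adj F n ≫ dBar L R adj F (n + 1) = 0,
      (ShortComplex.mk _ _ w).Exact) :=
  ⟨mono_unit_app L R adj F, ⟨_, exact_augmentedDiff L R adj F 0⟩,
    fun n => ⟨_, exact_augmentedDiff L R adj F (n + 1)⟩⟩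

end Statement1
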